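/- If the function min(nx, c_1 + (n-1)x, ..., c_n) equals (as a function of x) Σ_{i=1}^{k} ℓ̃_i · min(x, p̃_i) + r·x with p̃_1 < p̃_2 < ⋯ < p̃_k, then for each m = 1,...,k the partial sums satisfy c_{ℓ̃_1 + ⋯ + ℓ̃_m} = ℓ̃_1 p̃_1 + ℓ̃_2 p̃_2 + ⋯ + ℓ̃_m p̃_m. -/

import Mathlib

open Finset

/-- If the min-plus polynomial `min_{0≤j≤n}(c_j + (n-j)x)` (with `c₀ = 0`)
factors, as a function of `x`, into linear factors
`ℓ̃₁·min(x,p̃₁) + ⋯ + ℓ̃ₖ·min(x,p̃ₖ) + r·x` with `p̃₁ < ⋯ < p̃ₖ` and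
`ℓ̃₁ + ⋯ + ℓ̃ₖ + r = n`, then for each `m = 1,…,k` the coefficient at the
partial length sum satisfies
`c_{ℓ̃₁+⋯+ℓ̃ₘ} = ℓ̃₁p̃₁ + ℓ̃₂p̃₂ + ⋯ + ℓ̃ₘp̃ₘ`. -/
theorem minplus_factorization_partial_sums (n k r : ℕ)
    (ℓ : Fin k → ℕ) (p : Fin k → ℝ)
    (hℓ : ∀ i, 0 < ℓ i) (hp : StrictMono p)
    (hsum : (∑ i, ℓ i) + r = n)
    (c : ℕ → WithTop ℝ) (hc0 : c 0 = 0)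
    (hfact : ∀ x : ℝ,
      (range (n + 1)).inf (fun j => c j + ((((n - j : ℕ) : ℝ) * x : ℝ) : WithTop ℝ))
        = (((∑ i, (ℓ i : ℝ) * min x (p i)) + (r : ℝ) * x : ℝ) : WithTop ℝ)) :
    ∀ m, 1 ≤ m → m ≤ k →
      c (∑ i ∈ Finset.univ.filter (fun i : Fin k => (i : ℕ) < m), ℓ i)
        = (((∑ i ∈ Finset.univ.filter (fun i : Fin k => (i : ℕ) < m),
              (ℓ i : ℝ) * p i) : ℝ) : WithTop ℝ) := by
  intro m hm1 hmk
  classical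
  set F : Finset (Fin k) := Finset.univ.filter (fun i : Fin k => (i : ℕ) < m) with hF
  set L : ℕ := ∑ i ∈ F, ℓ i with hL
  set A : ℝ := ∑ i ∈ F, (ℓ i : ℝ) * p i with hA
  have hLsum : L + (∑ i ∈ Finset.univ.filter (fun i : Fin k => ¬ (i : ℕ) < m), ℓ i) = ∑ i, ℓ i := by
    rw [hL, hF]
    exact Finset.sum_filter_add_sum_filter_not _ _ _
  have hLn : L ≤ n := by omega
  have hm1k : m - 1 < k := by omega
  set x0 := p ⟨m - 1, hm1k⟩ with hx0
  set u : ℝ := if h : m < k then p ⟨m, h⟩ else x0 + 1 with hu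
  have hx0u : x0 < u := by
    by_cases h : m < k
    · simp only [hu, dif_pos h]
      exact hp (by simp [Fin.lt_def]; omega)
    · simp only [hu, dif_neg h]; linarith
  -- on the interval, the RHS is affine with slope n - L
  have key : ∀ x ∈ Set.Ioo x0 u,
      (∑ i, (ℓ i : ℝ) * min x (p i)) + (r : ℝ) * x = A + ((n : ℝ) - L) * x := by
    intro x hx
    have hsplit : (∑ i, (ℓ i : ℝ) * min x (p i))
        = (∑ i ∈ F, (ℓ i : ℝ) * min x (p i))
          + ∑ i ∈ Finset.univ.filter (fun i : Fin k => ¬ (i : ℕ) < m), (ℓ i : ℝ) * min x (p i) := by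
      rw [hF]
      exact (Finset.sum_filter_add_sum_filter_not _ _ _).symm
    have h1 : ∀ i ∈ F, (ℓ i : ℝ) * min x (p i) = (ℓ i : ℝ) * p i := by
      intro i hi
      have hi' : (i : ℕ) < m := by simpa [hF] using hi
      have : p i ≤ x0 := hp.monotone (by simp [Fin.le_def]; omega)
      rw [min_eq_right (by linarith [hx.1])]
    have h2 : ∀ i ∈ Finset.univ.filter (fun i : Fin k => ¬ (i : ℕ) < m),
        (ℓ i : ℝ) * min x (p i) = (ℓ i : ℝ) * x := by
      intro i hi
      have hi' : m ≤ (i : ℕ) := by simpa [hF] using hi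
      have hmk' : m < k := lt_of_le_of_lt hi' i.2
      have hup : u ≤ p i := by
        simp only [hu, dif_pos hmk']
        exact hp.monotone (by simp [Fin.le_def]; omega)
      rw [min_eq_left (by linarith [hx.2])]
    rw [hsplit, Finset.sum_congr rfl h1, Finset.sum_congr rfl h2, ← Finset.sum_mul]
    have hcast : (∑ i ∈ Finset.univ.filter (fun i : Fin k => ¬ (i : ℕ) < m), (ℓ i : ℝ)) + (r : ℝ)
        = (n : ℝ) - L := by
      have : ((∑ i ∈ Finset.univ.filter (fun i : Fin k => ¬ (i : ℕ) < m), ℓ i : ℕ) : ℝ) + (r : ℝ)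
          = (n : ℝ) - L := by
        have hn : (∑ i ∈ Finset.univ.filter (fun i : Fin k => ¬ (i : ℕ) < m), ℓ i) + r = n - L := by
          omega
        rw [← Nat.cast_add, hn, Nat.cast_sub hLn]
      simpa [Nat.cast_sum] using this
    rw [hA]
    linear_combination x * hcast
  -- each point of the interval chooses an index attaining the min
  have hch : ∀ x ∈ Set.Ioo x0 u, ∃ j, j ∈ Finset.range (n + 1) ∧
      c j + ((((n - j : ℕ) : ℝ) * x : ℝ) : WithTop ℝ)
        = ((A + ((n : ℝ) - L) * x : ℝ) : WithTop ℝ) := by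
    intro x hx
    obtain ⟨j, hj, hje⟩ := Finset.exists_mem_eq_inf (Finset.range (n + 1))
      Finset.nonempty_range_add_one
      (fun j => c j + ((((n - j : ℕ) : ℝ) * x : ℝ) : WithTop ℝ))
    refine ⟨j, hj, ?_⟩
    rw [← hje, hfact x, key x hx]
  set g : ℝ → ℕ := fun x => if hx : x ∈ Set.Ioo x0 u then (hch x hx).choose else 0 with hg
  have hgmem : ∀ x ∈ Set.Ioo x0 u, g x ∈ Finset.range (n + 1) := by
    intro x hx
    simp only [hg, dif_pos hx]
    exact (hch x hx).choose_spec.1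
  have hgeq : ∀ x (hx : x ∈ Set.Ioo x0 u),
      c (g x) + ((((n - g x : ℕ) : ℝ) * x : ℝ) : WithTop ℝ)
        = ((A + ((n : ℝ) - L) * x : ℝ) : WithTop ℝ) := by
    intro x hx
    simp only [hg, dif_pos hx]
    exact (hch x hx).choose_spec.2
  obtain ⟨x, hx, y, hy, hxy, hgxy⟩ :=
    (Set.Ioo_infinite hx0u).exists_ne_map_eq_of_mapsTo
      (f := g) (fun x hx => hgmem x hx) (Finset.range (n + 1)).finite_toSet
  set j := g x with hj
  have hjn : j ≤ n := by
    have := hgmem x hx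
    simp [hj, Finset.mem_range] at this
    omega
  have e1 := hgeq x hx
  have e2 := hgeq y hy
  rw [← hgxy] at e2
  -- c j is finite
  have hcj : c j ≠ ⊤ := by
    intro h
    rw [h, top_add] at e1
    exact WithTop.coe_ne_top e1.symm
  lift c j to ℝ using hcj with b hb
  have e1' : b + ((n - j : ℕ) : ℝ) * x = A + ((n : ℝ) - L) * x := by
    rw [← hj, ← hb] at e1
    exact_mod_cast e1
  have e2' : b + ((n - j : ℕ) : ℝ) * y = A + ((n : ℝ) - L) * y := by
    exact_mod_cast e2
  have hslope : ((n - j : ℕ) : ℝ) = (n : ℝ) - L := by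
    have hmul : ((n - j : ℕ) : ℝ) * (x - y) = ((n : ℝ) - L) * (x - y) := by ring_nf; nlinarith [e1', e2']
    exact mul_right_cancel₀ (sub_ne_zero.mpr hxy) hmul
  have hjL : j = L := by
    have : ((n - j : ℕ) : ℝ) = ((n - L : ℕ) : ℝ) := by rw [hslope, Nat.cast_sub hLn]
    have := Nat.cast_injective this
    omega
  have hbA : b = A := by
    rw [hslope] at e1'
    linarith
  rw [← hjL, ← hbA]
  exact hb.symm
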